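/- The set W = {([z₁:z₂],[w₁:w₂]) ∈ ℙ¹ × ℙ¹ : |z₂| < |z₁| and z₁w₁ − z₂w₂ ≠ 0} is invariant under the twisted diagonal action of SU(1,1): for every g ∈ SU(1,1), if ([z],[w]) ∈ W then g·([z],[w]) ∈ W. -/

import Mathlib

open Matrix Complex

noncomputable section

abbrev M2 : Type := Matrix (Fin 2) (Fin 2) ℂ

/-- The diagonal matrix `diag(1,-1)`. -/
def I11 : M2 := !![1, 0; 0, -1]

/-- The conjugation `σ(g) = I₁₁ ⬝ ᵗ(ḡ)⁻¹ ⬝ I₁₁`. -/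
def sigmaC (g : M2) : M2 := I11 * ((g.map (starRingEnd ℂ))ᵀ)⁻¹ * I11

/-- `overline{σ(g)}`, the matrix acting on the second factor. -/
def tw (g : M2) : M2 := (sigmaC g).map (starRingEnd ℂ)

/-- The predicate `g ∈ SU(1,1)`. -/
def SU11 (g : M2) : Prop := g.det = 1 ∧ (g.map (starRingEnd ℂ))ᵀ * I11 * g = I11

abbrev P1 : Type := Projectivization ℂ (Fin 2 → ℂ)

lemma fstNe (a b : ℂ) (ha : a ≠ 0) : ![a, b] ≠ 0 := by
  intro h
  exact ha (by simpa using congrFun h 0)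

lemma oneNe (b : ℂ) : ![1, b] ≠ 0 := fstNe 1 b one_ne_zero

/-- The open `SL(2,ℂ)`-orbit `{ z₁w₁ - z₂w₂ ≠ 0 }` in `ℙ¹ × ℙ¹`. -/
def Omega : Set (P1 × P1) :=
  {p | ∃ (z w : Fin 2 → ℂ) (hz : z ≠ 0) (hw : w ≠ 0),
    p = (Projectivization.mk ℂ z hz, Projectivization.mk ℂ w hw) ∧
    z 0 * w 0 - z 1 * w 1 ≠ 0}

/-- The domain `W ⊂ ℙ¹ × ℙ¹`. -/
def W : Set (P1 × P1) :=
  {p | ∃ (z w : Fin 2 → ℂ) (hz : z ≠ 0) (hw : w ≠ 0),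
    p = (Projectivization.mk ℂ z hz, Projectivization.mk ℂ w hw) ∧
    ‖z 1‖ < ‖z 0‖ ∧ z 0 * w 0 - z 1 * w 1 ≠ 0}

/-! With `J = I₁₁`, the relation `ᵗḡ J g = J` says that `g` preserves the Hermitian form
`⟨z, z⟩ = |z₁|² - |z₂|²`, whose positivity is the disc condition. Since `overline{σ(g)} = J ᵗg⁻¹ J`,
also `ᵗg J overline{σ(g)} = J`, so the twisted action preserves the bilinear form
`B(z, w) = z₁w₁ - z₂w₂` on the nose. Both conditions are homogeneous, hence independent of the
chosen representatives. -/

theorem Matrix.dotProduct_mulVec_mulVec_of_transpose_mul_mul {n R : Type*} [Fintype n]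
    [CommSemiring R] {A B J : Matrix n n R} (h : Aᵀ * J * B = J) (v w : n → R) :
    (A *ᵥ v) ⬝ᵥ (J *ᵥ (B *ᵥ w)) = v ⬝ᵥ (J *ᵥ w) := by
  rw [← vecMul_transpose, ← dotProduct_mulVec, mulVec_mulVec, mulVec_mulVec, h]

lemma I11_mul_I11 : I11 * I11 = 1 := by
  simp [I11, one_fin_two]

lemma map_conj_I11 : I11.map (starRingEnd ℂ) = I11 := by
  ext i j
  fin_cases i <;> fin_cases j <;> simp [I11]

lemma dotProduct_I11_mulVec (z w : Fin 2 → ℂ) : z ⬝ᵥ (I11 *ᵥ w) = z 0 * w 0 - z 1 * w 1 := by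
  simp [I11, dotProduct, Fin.sum_univ_two, sub_eq_add_neg]

lemma star_dotProduct_I11_mulVec (z : Fin 2 → ℂ) :
    star z ⬝ᵥ (I11 *ᵥ z) = ((‖z 0‖ ^ 2 - ‖z 1‖ ^ 2 : ℝ) : ℂ) := by
  rw [dotProduct_I11_mulVec]
  simp [Complex.conj_mul']

lemma map_conj_transpose_mul_I11_mul_sigmaC {g : M2} (hg : IsUnit g.det) :
    (g.map (starRingEnd ℂ))ᵀ * I11 * sigmaC g = I11 := by
  have hdet : IsUnit (g.map (starRingEnd ℂ))ᵀ.det := by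
    rw [det_transpose, show (g.map (starRingEnd ℂ)).det = starRingEnd ℂ g.det from
      (RingHom.map_det _ g).symm]
    exact hg.map _
  rw [sigmaC, ← Matrix.mul_assoc, ← Matrix.mul_assoc, Matrix.mul_assoc _ I11 I11, I11_mul_I11,
    Matrix.mul_one, mul_nonsing_inv _ hdet, Matrix.one_mul]

lemma transpose_mul_I11_mul_tw {g : M2} (hg : IsUnit g.det) : gᵀ * I11 * tw g = I11 := by
  have := congrArg (·.map (starRingEnd ℂ)) (map_conj_transpose_mul_I11_mul_sigmaC hg)
  simpa [Matrix.map_mul, map_conj_I11, tw, ← Matrix.transpose_map, Function.comp_def] using this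

lemma norm_sq_sub_norm_sq_mulVec {g : M2} (hg : (g.map (starRingEnd ℂ))ᵀ * I11 * g = I11)
    (z : Fin 2 → ℂ) :
    ‖(g *ᵥ z) 0‖ ^ 2 - ‖(g *ᵥ z) 1‖ ^ 2 = ‖z 0‖ ^ 2 - ‖z 1‖ ^ 2 := by
  have h := dotProduct_mulVec_mulVec_of_transpose_mul_mul hg (star z) z
  have hstar : g.map (starRingEnd ℂ) *ᵥ star z = star (g *ᵥ z) := by
    rw [star_mulVec, ← mulVec_transpose]; rfl
  rwa [hstar, star_dotProduct_I11_mulVec, star_dotProduct_I11_mulVec, ofReal_inj] at h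

lemma I11_form_mulVec_tw {g : M2} (hg : IsUnit g.det) (z w : Fin 2 → ℂ) :
    (g *ᵥ z) 0 * (tw g *ᵥ w) 0 - (g *ᵥ z) 1 * (tw g *ᵥ w) 1 = z 0 * w 0 - z 1 * w 1 := by
  rw [← dotProduct_I11_mulVec, ← dotProduct_I11_mulVec,
    dotProduct_mulVec_mulVec_of_transpose_mul_mul (transpose_mul_I11_mul_tw hg)]

lemma mk_mk_mem_W_iff {z w : Fin 2 → ℂ} (hz : z ≠ 0) (hw : w ≠ 0) :
    (Projectivization.mk ℂ z hz, Projectivization.mk ℂ w hw) ∈ W ↔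
      ‖z 1‖ < ‖z 0‖ ∧ z 0 * w 0 - z 1 * w 1 ≠ 0 := by
  refine ⟨?_, fun h => ⟨z, w, hz, hw, rfl, h⟩⟩
  rintro ⟨z', w', hz', hw', heq, hlt, hne⟩
  obtain ⟨a, rfl⟩ := (Projectivization.mk_eq_mk_iff ℂ _ _ hz hz').mp (congrArg Prod.fst heq)
  obtain ⟨b, rfl⟩ := (Projectivization.mk_eq_mk_iff ℂ _ _ hw hw').mp (congrArg Prod.snd heq)
  refine ⟨by simpa [Units.smul_def, norm_mul] using hlt, ?_⟩
  have hscale : (a • z') 0 * (b • w') 0 - (a • z') 1 * (b • w') 1 =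
      a * b * (z' 0 * w' 0 - z' 1 * w' 1) := by
    simp only [Units.smul_def, Pi.smul_apply, smul_eq_mul]
    ring
  rw [hscale]
  exact mul_ne_zero (mul_ne_zero a.ne_zero b.ne_zero) hne

/-- `W` is invariant under the twisted diagonal action of `SU(1,1)`. -/
theorem W_invariant (g : M2) (hg : SU11 g) (z w : Fin 2 → ℂ) (hz : z ≠ 0) (hw : w ≠ 0)
    (hmem : (Projectivization.mk ℂ z hz, Projectivization.mk ℂ w hw) ∈ W)
    (hz' : g.mulVec z ≠ 0) (hw' : (tw g).mulVec w ≠ 0) :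
    (Projectivization.mk ℂ (g.mulVec z) hz',
      Projectivization.mk ℂ ((tw g).mulVec w) hw') ∈ W := by
  rw [mk_mk_mem_W_iff] at hmem ⊢
  obtain ⟨hdisk, hne⟩ := hmem
  have hdet : IsUnit g.det := hg.1 ▸ isUnit_one
  refine ⟨?_, I11_form_mulVec_tw hdet z w ▸ hne⟩
  have hform := norm_sq_sub_norm_sq_mulVec hg.2 z
  rw [← pow_lt_pow_iff_left₀ (norm_nonneg _) (norm_nonneg _) two_ne_zero] at hdisk ⊢
  linarith

end
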